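/- arXiv:2312.02085 — 4 statements merged into one kernel-verified Lean document; each statement's English description precedes it below -/
import Mathlib

section
/- Let a : ℤ → ℝ be a sequence with a(n) ≠ 0 for all n ∈ ℤ satisfying the Somos-4 recurrence a(n)·a(n+4) = a(n+1)·a(n+3) + a(n+2)^2 for all n ∈ ℤ. If S(a(0), a(1), a(2), a(3)) = 0, then for all n ∈ ℤ one has a(n)·a(n+8) = a(n+2)·a(n+6) + a(n+4)^2; in other words, both the even subsequence n ↦ a(2n) and the odd subsequence n ↦ a(2n+1) again satisfy the Somos-4 recurrence. -/
/-!
`S(a₀, a₁, a₂, a₃) / (a₀ a₁ a₂ a₃) = T + 2`, where `T` is the classical conserved quantity of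
Somos-4. Hence `S` vanishes on every window of four consecutive terms as soon as it vanishes on
one. The doubled relation then follows from a polynomial identity: modulo five consecutive Somos-4
relations, the defect `a₀ a₈ - a₂ a₆ - a₄²` times the monomial `a₃ a₄² a₅ a₆²` is a multiple
of `S(a₃, a₄, a₅, a₆)`.
-/

/-- The quartic polynomial `S` associated to Somos-4 sequences with Somos-4
even and odd subsequences. -/
def somosS (a0 a1 a2 a3 : ℝ) : ℝ :=
  a0 ^ 2 * a3 ^ 2 + a1 ^ 2 * a2 ^ 2 + a0 * a2 ^ 3 + a3 * a1 ^ 3 + 2 * a0 * a1 * a2 * a3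

lemma mul_somosS_succ (e₀ e₁ e₂ e₃ e₄ : ℝ) (h : e₀ * e₄ = e₁ * e₃ + e₂ ^ 2) :
    e₀ * somosS e₁ e₂ e₃ e₄ = e₄ * somosS e₀ e₁ e₂ e₃ := by
  unfold somosS
  linear_combination (e₁ ^ 2 * e₄ - e₀ * e₃ ^ 2) * h

lemma somos8_defect_mul_eq (e₀ e₁ e₂ e₃ e₄ e₅ e₆ e₇ e₈ : ℝ)
    (h₀ : e₀ * e₄ = e₁ * e₃ + e₂ ^ 2) (h₁ : e₁ * e₅ = e₂ * e₄ + e₃ ^ 2)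
    (h₂ : e₂ * e₆ = e₃ * e₅ + e₄ ^ 2) (h₃ : e₃ * e₇ = e₄ * e₆ + e₅ ^ 2)
    (h₄ : e₄ * e₈ = e₅ * e₇ + e₆ ^ 2) :
    e₃ * e₄ ^ 2 * e₅ * e₆ ^ 2 * (e₀ * e₈ - e₂ * e₆ - e₄ ^ 2) =
      somosS e₃ e₄ e₅ e₆ * (e₃ ^ 2 * e₆ ^ 2 + e₃ * e₅ ^ 3 + e₄ ^ 2 * e₅ ^ 2) := by
  unfold somosS
  linear_combination e₃ * e₄ * e₅ * e₆ ^ 2 * e₈ * h₀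
    + (e₃ ^ 2 * e₆ ^ 4 + e₃ * e₄ * e₅ * e₆ ^ 3 + e₃ * e₅ ^ 3 * e₆ ^ 2) * h₁
    + (e₂ * e₃ * e₄ * e₅ * e₆ * e₈ + e₃ ^ 2 * e₄ * e₅ ^ 2 * e₈ + e₃ ^ 2 * e₄ * e₆ ^ 3
      + e₃ * e₄ ^ 3 * e₅ * e₈ + e₃ * e₄ * e₅ ^ 3 * e₆) * h₂
    + (e₁ * e₃ * e₅ ^ 2 * e₆ ^ 2 + e₃ ^ 2 * e₅ ^ 4 + 2 * e₃ * e₄ ^ 2 * e₅ ^ 3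
      + e₄ ^ 4 * e₅ ^ 2) * h₃
    + (e₁ * e₃ ^ 2 * e₅ * e₆ ^ 2 + e₃ ^ 3 * e₅ ^ 3 + 2 * e₃ ^ 2 * e₄ ^ 2 * e₅ ^ 2
      + e₃ * e₄ ^ 4 * e₅) * h₄

def IsSomos4 (a : ℤ → ℝ) : Prop :=
  ∀ n : ℤ, a n * a (n + 4) = a (n + 1) * a (n + 3) + a (n + 2) ^ 2

def somosWindow (a : ℤ → ℝ) (n : ℤ) : ℝ :=
  somosS (a n) (a (n + 1)) (a (n + 2)) (a (n + 3))

namespace IsSomos4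

variable {a : ℤ → ℝ}

lemma shift (ha : IsSomos4 a) (n k : ℤ) :
    a (n + k) * a (n + (k + 4)) =
      a (n + (k + 1)) * a (n + (k + 3)) + a (n + (k + 2)) ^ 2 := by
  simpa only [add_assoc] using ha (n + k)

lemma mul_somosWindow_succ (ha : IsSomos4 a) (n : ℤ) :
    a n * somosWindow a (n + 1) = a (n + 4) * somosWindow a n := by
  simpa only [somosWindow, add_assoc, Int.reduceAdd] using
    mul_somosS_succ _ _ _ _ _ (ha n)

lemma somosWindow_succ_eq_zero_iff (ha : IsSomos4 a) (hne : ∀ n, a n ≠ 0) (n : ℤ) :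
    somosWindow a (n + 1) = 0 ↔ somosWindow a n = 0 := by
  rw [← mul_right_inj' (hne n), ha.mul_somosWindow_succ n, mul_zero, mul_eq_zero,
    or_iff_right (hne (n + 4))]

lemma somosWindow_eq_zero (ha : IsSomos4 a) (hne : ∀ n, a n ≠ 0)
    (h₀ : somosWindow a 0 = 0) (n : ℤ) : somosWindow a n = 0 := by
  induction n using Int.induction_on with
  | zero => exact h₀
  | succ k ih => exact (ha.somosWindow_succ_eq_zero_iff hne k).2 ih
  | pred k ih =>
    exact (ha.somosWindow_succ_eq_zero_iff hne (-k - 1)).1 (by rwa [sub_add_cancel])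

lemma mul_add_eight (ha : IsSomos4 a) (hne : ∀ n, a n ≠ 0) {n : ℤ}
    (hW : somosWindow a (n + 3) = 0) : a n * a (n + 8) = a (n + 2) * a (n + 6) + a (n + 4) ^ 2 := by
  have key := somos8_defect_mul_eq (a n) (a (n + 1)) (a (n + 2)) (a (n + 3)) (a (n + 4))
    (a (n + 5)) (a (n + 6)) (a (n + 7)) (a (n + 8))
    (ha n) (ha.shift n 1) (ha.shift n 2) (ha.shift n 3) (ha.shift n 4)
  have hS : somosS (a (n + 3)) (a (n + 4)) (a (n + 5)) (a (n + 6)) = 0 := by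
    simpa only [somosWindow, add_assoc, Int.reduceAdd] using hW
  have hM : a (n + 3) * a (n + 4) ^ 2 * a (n + 5) * a (n + 6) ^ 2 ≠ 0 := by
    simp [hne]
  rw [hS, zero_mul, mul_eq_zero, or_iff_right hM, sub_sub, sub_eq_zero] at key
  exact key

end IsSomos4

theorem stmt_0 (a : ℤ → ℝ) (hne : ∀ n : ℤ, a n ≠ 0)
    (hrec : ∀ n : ℤ, a n * a (n + 4) = a (n + 1) * a (n + 3) + a (n + 2) ^ 2)
    (hS : somosS (a 0) (a 1) (a 2) (a 3) = 0) :
    (∀ n : ℤ, a n * a (n + 8) = a (n + 2) * a (n + 6) + a (n + 4) ^ 2) ∧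
    (∀ n : ℤ, a (2 * n) * a (2 * (n + 4)) =
      a (2 * (n + 1)) * a (2 * (n + 3)) + a (2 * (n + 2)) ^ 2) ∧
    (∀ n : ℤ, a (2 * n + 1) * a (2 * (n + 4) + 1) =
      a (2 * (n + 1) + 1) * a (2 * (n + 3) + 1) + a (2 * (n + 2) + 1) ^ 2) := by
  have ha : IsSomos4 a := hrec
  have hW := ha.somosWindow_eq_zero hne (by simpa [somosWindow] using hS)
  have h8 (n : ℤ) := ha.mul_add_eight hne (hW (n + 3))
  refine ⟨h8, fun n => ?_, fun n => ?_⟩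
  · convert h8 (2 * n) using 3 <;> ring_nf
  · convert h8 (2 * n + 1) using 3 <;> ring_nf
end

section
/- Let a0, a1, a2, a3 be real numbers with a0 ≠ 0, and set a4 = (a1·a3 + a2^2) / a0. Then S(a1, a2, a3, a4) · a0^2 = S(a0, a1, a2, a3) · (a1·a3 + a2^2). -/
theorem stmt_1 (a0 a1 a2 a3 : ℝ) (h0 : a0 ≠ 0)
    (a4 : ℝ) (ha4 : a4 = (a1 * a3 + a2 ^ 2) / a0) :
    somosS a1 a2 a3 a4 * a0 ^ 2 = somosS a0 a1 a2 a3 * (a1 * a3 + a2 ^ 2) := by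
  subst ha4
  simp only [somosS]
  field_simp
  ring
end

section
/- Let a : ℤ → ℝ be a sequence with a(n) ≠ 0 for all n ∈ ℤ satisfying the Somos-4 recurrence a(n)·a(n+4) = a(n+1)·a(n+3) + a(n+2)^2. Define S_n = S(a(n), a(n+1), a(n+2), a(n+3)). If S_0 = 0, then S_n = 0 for all n ∈ ℤ (both for positive and negative n). -/
theorem mul_somosS_succ_eq {x₀ x₁ x₂ x₃ x₄ : ℝ} (h : x₀ * x₄ = x₁ * x₃ + x₂ ^ 2) :
    x₀ * somosS x₁ x₂ x₃ x₄ = x₄ * somosS x₀ x₁ x₂ x₃ := by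
  unfold somosS
  linear_combination (x₁ ^ 2 * x₄ - x₀ * x₃ ^ 2) * h

theorem somosS_eq_zero_iff_succ {x₀ x₁ x₂ x₃ x₄ : ℝ} (h₀ : x₀ ≠ 0) (h₄ : x₄ ≠ 0)
    (h : x₀ * x₄ = x₁ * x₃ + x₂ ^ 2) :
    somosS x₀ x₁ x₂ x₃ = 0 ↔ somosS x₁ x₂ x₃ x₄ = 0 := by
  have key := mul_somosS_succ_eq h
  constructor <;> intro hS
  · simpa [hS, h₀] using key
  · simpa [hS, h₄, eq_comm] using key

theorem Int.forall_of_iff_succ {p : ℤ → Prop} (hp : ∀ n, p n ↔ p (n + 1)) (h₀ : p 0) :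
    ∀ n, p n := by
  intro n
  induction n using Int.induction_on with
  | zero => exact h₀
  | succ k ih => exact (hp k).mp ih
  | pred k ih => exact (hp (-k - 1)).mpr (by simpa using ih)

theorem stmt_2 (a : ℤ → ℝ) (hne : ∀ n : ℤ, a n ≠ 0)
    (hrec : ∀ n : ℤ, a n * a (n + 4) = a (n + 1) * a (n + 3) + a (n + 2) ^ 2)
    (hS0 : somosS (a 0) (a 1) (a 2) (a 3) = 0) :
    ∀ n : ℤ, somosS (a n) (a (n + 1)) (a (n + 2)) (a (n + 3)) = 0 := by
  refine Int.forall_of_iff_succ (fun n => ?_) (by simpa using hS0)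
  have step := somosS_eq_zero_iff_succ (hne n) (hne (n + 4)) (hrec n)
  convert step using 4 <;> ring
end

section
/- Let a0, a1, a2, a3 be real numbers with a3 ≠ 0. Since S is quadratic in its first argument with leading coefficient a3^2 and linear coefficient a2^3 + 2·a1·a2·a3, the Vieta involution H sending a0 to a0' = -(a2^3 + 2·a1·a2·a3)/a3^2 - a0 satisfies S(a0', a1, a2, a3) = S(a0, a1, a2, a3); in particular H maps the quartic surface S = 0 to itself. -/
theorem stmt_5 (a0 a1 a2 a3 : ℝ) (h3 : a3 ≠ 0) :
    somosS (-(a2 ^ 3 + 2 * a1 * a2 * a3) / a3 ^ 2 - a0) a1 a2 a3 =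
      somosS a0 a1 a2 a3 := by
  unfold somosS
  field_simp
  ring
end
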